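/- For any q ∈ ℝ, sup_{x∈ℝ} |Φ(x+q) - Φ(x)| = 2Φ(|q|/2) - 1 ≤ |q|/√(2π), where Φ is the standard normal cumulative distribution function. -/

import Mathlib

/-!
The density `φ = Φ'` is even and decreasing in `|t|`, so `x ↦ Φ (x + L) - Φ x` increases up to
`x = -L/2` and decreases afterwards: of all windows of length `|q|`, the centred one carries the
most Gaussian mass, namely `Φ (|q|/2) - Φ (-|q|/2) = 2 Φ (|q|/2) - 1`. Bounding `φ` on that window
by `φ 0 = 1/√(2π)` gives the estimate.
-/

open MeasureTheory Real

noncomputable def stdNormalCDF (x : ℝ) : ℝ :=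
  ∫ t in Set.Iic x, Real.exp (-t ^ 2 / 2) / Real.sqrt (2 * Real.pi)

open Set ProbabilityTheory

lemma abs_sub_eq_max_sub_min_of_monotone {α β : Type*} [LinearOrder α] [AddCommGroup β]
    [LinearOrder β] [IsOrderedAddMonoid β] {F : α → β} (hF : Monotone F) (a b : α) :
    |F b - F a| = F (max a b) - F (min a b) := by
  rcases le_total a b with h | h
  · rw [max_eq_right h, min_eq_left h, abs_of_nonneg (sub_nonneg.mpr (hF h))]
  · rw [max_eq_left h, min_eq_right h, abs_of_nonpos (sub_nonpos.mpr (hF h)), neg_sub]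

theorem sub_le_sub_centered_of_hasDerivAt {F f : ℝ → ℝ} (hF : ∀ x, HasDerivAt F (f x) x)
    (hf : ∀ x y, |y| ≤ |x| → f x ≤ f y) {L : ℝ} (hL : 0 ≤ L) (a : ℝ) :
    F (a + L) - F a ≤ F (L / 2) - F (-(L / 2)) := by
  set g : ℝ → ℝ := fun v => F (v + L) - F v
  have hg (v : ℝ) : HasDerivAt g (f (v + L) - f v) v :=
    ((hF (v + L)).comp_add_const v L).sub (hF v)
  have hgc : Continuous g := continuous_iff_continuousAt.2 fun v => (hg v).continuousAt
  have hcentre : g (-(L / 2)) = F (L / 2) - F (-(L / 2)) := by simp only [g]; ring_nf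
  rw [← hcentre]
  rcases le_total a (-(L / 2)) with ha | ha
  · refine monotoneOn_of_hasDerivWithinAt_nonneg (convex_Iic _) hgc.continuousOn
      (fun v _ => (hg v).hasDerivWithinAt) (fun v hv => ?_) ha self_mem_Iic ha
    rw [interior_Iic, mem_Iio] at hv
    have : |v + L| ≤ |v| := sq_le_sq.mp (by nlinarith)
    linarith [hf v (v + L) this]
  · refine antitoneOn_of_hasDerivWithinAt_nonpos (convex_Ici _) hgc.continuousOn
      (fun v _ => (hg v).hasDerivWithinAt) (fun v hv => ?_) self_mem_Ici ha ha
    rw [interior_Ici, mem_Ioi] at hv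
    have : |v| ≤ |v + L| := sq_le_sq.mp (by nlinarith)
    linarith [hf (v + L) v this]

lemma gaussianPDFReal_le_of_abs_sub_le (μ : ℝ) (v : NNReal) {x y : ℝ} (h : |y - μ| ≤ |x - μ|) :
    gaussianPDFReal μ v x ≤ gaussianPDFReal μ v y := by
  have hsq : (y - μ) ^ 2 ≤ (x - μ) ^ 2 := sq_le_sq.mpr h
  unfold gaussianPDFReal
  gcongr

lemma gaussianPDFReal_le (μ : ℝ) (v : NNReal) (x : ℝ) :
    gaussianPDFReal μ v x ≤ (√(2 * π * v))⁻¹ := by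
  simpa [gaussianPDFReal] using gaussianPDFReal_le_of_abs_sub_le μ v (x := x) (y := μ) (by simp)

lemma continuous_gaussianPDFReal (μ : ℝ) (v : NNReal) : Continuous (gaussianPDFReal μ v) := by
  unfold gaussianPDFReal; fun_prop

lemma stdNormalCDF_eq_integral_gaussianPDFReal (x : ℝ) :
    stdNormalCDF x = ∫ t in Iic x, gaussianPDFReal 0 1 t := by
  simp [stdNormalCDF, gaussianPDFReal, div_eq_inv_mul]

lemma stdNormalCDF_sub_stdNormalCDF (a b : ℝ) :
    stdNormalCDF b - stdNormalCDF a = ∫ t in a..b, gaussianPDFReal 0 1 t := by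
  simp only [stdNormalCDF_eq_integral_gaussianPDFReal]
  exact intervalIntegral.integral_Iic_sub_Iic (integrable_gaussianPDFReal 0 1).integrableOn
    (integrable_gaussianPDFReal 0 1).integrableOn

lemma monotone_stdNormalCDF : Monotone stdNormalCDF := fun a b hab => by
  rw [← sub_nonneg, stdNormalCDF_sub_stdNormalCDF]
  exact intervalIntegral.integral_nonneg hab fun t _ => gaussianPDFReal_nonneg 0 1 t

lemma hasDerivAt_stdNormalCDF (x : ℝ) : HasDerivAt stdNormalCDF (gaussianPDFReal 0 1 x) x := by
  have h : stdNormalCDF = fun u => stdNormalCDF 0 + ∫ t in (0 : ℝ)..u, gaussianPDFReal 0 1 t := by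
    funext u
    rw [← stdNormalCDF_sub_stdNormalCDF, add_sub_cancel]
  rw [h]
  exact ((continuous_gaussianPDFReal 0 1).integral_hasStrictDerivAt 0 x).hasDerivAt.const_add _

lemma stdNormalCDF_neg (x : ℝ) : stdNormalCDF (-x) = 1 - stdNormalCDF x := by
  have hint := (integrable_gaussianPDFReal 0 1).integrableOn (s := Iic x)
  have htail : stdNormalCDF (-x) = ∫ t in Ioi x, gaussianPDFReal 0 1 t := by
    rw [stdNormalCDF_eq_integral_gaussianPDFReal, ← integral_comp_neg_Ioi]
    simp [gaussianPDFReal]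
  rw [htail, ← integral_gaussianPDFReal_eq_one 0 one_ne_zero,
    ← intervalIntegral.integral_Iic_add_Ioi hint (integrable_gaussianPDFReal 0 1).integrableOn,
    ← stdNormalCDF_eq_integral_gaussianPDFReal, add_sub_cancel_left]

lemma two_mul_stdNormalCDF_sub_one (x : ℝ) :
    2 * stdNormalCDF x - 1 = stdNormalCDF x - stdNormalCDF (-x) := by
  rw [stdNormalCDF_neg]; ring

lemma abs_stdNormalCDF_sub_le (a b : ℝ) :
    |stdNormalCDF b - stdNormalCDF a| ≤ |b - a| / √(2 * π) := by
  rw [stdNormalCDF_sub_stdNormalCDF, div_eq_inv_mul, ← Real.norm_eq_abs (∫ _ in _.._, _)]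
  refine intervalIntegral.norm_integral_le_of_norm_le_const fun t _ => ?_
  rw [Real.norm_of_nonneg (gaussianPDFReal_nonneg 0 1 t)]
  simpa using gaussianPDFReal_le 0 1 t

lemma abs_stdNormalCDF_add_sub_le (x q : ℝ) :
    |stdNormalCDF (x + q) - stdNormalCDF x| ≤ 2 * stdNormalCDF (|q| / 2) - 1 := by
  have hwidth : max x (x + q) = min x (x + q) + |q| := by
    rw [← sub_eq_iff_eq_add', max_sub_min_eq_abs, add_sub_cancel_left]
  rw [abs_sub_eq_max_sub_min_of_monotone monotone_stdNormalCDF, hwidth,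
    two_mul_stdNormalCDF_sub_one]
  exact sub_le_sub_centered_of_hasDerivAt hasDerivAt_stdNormalCDF
    (fun t s h => gaussianPDFReal_le_of_abs_sub_le 0 1 (by simpa using h)) (abs_nonneg q) _

lemma abs_stdNormalCDF_half_sub_neg_half (q : ℝ) :
    |stdNormalCDF (-(q / 2) + q) - stdNormalCDF (-(q / 2))| = 2 * stdNormalCDF (|q| / 2) - 1 := by
  have hmax : max (-(q / 2)) (q / 2) = |q| / 2 := by
    rw [max_comm, ← abs_eq_max_neg, abs_div, abs_two]
  have hmin : min (-(q / 2)) (q / 2) = -(|q| / 2) := by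
    rw [← hmax, neg_sup, neg_neg, min_comm]
  rw [abs_sub_eq_max_sub_min_of_monotone monotone_stdNormalCDF, neg_add_eq_sub, sub_half, hmax,
    hmin, two_mul_stdNormalCDF_sub_one]

theorem sup_shift_stdNormalCDF (q : ℝ) :
    (⨆ x : ℝ, |stdNormalCDF (x + q) - stdNormalCDF x|) = 2 * stdNormalCDF (|q| / 2) - 1 ∧
      2 * stdNormalCDF (|q| / 2) - 1 ≤ |q| / Real.sqrt (2 * Real.pi) := by
  refine ⟨le_antisymm (ciSup_le (abs_stdNormalCDF_add_sub_le · q)) ?_, ?_⟩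
  · rw [← abs_stdNormalCDF_half_sub_neg_half q]
    exact le_ciSup ⟨_, forall_mem_range.2 (abs_stdNormalCDF_add_sub_le · q)⟩ _
  · calc 2 * stdNormalCDF (|q| / 2) - 1
        ≤ |stdNormalCDF (|q| / 2) - stdNormalCDF (-(|q| / 2))| := by
          rw [two_mul_stdNormalCDF_sub_one]; exact le_abs_self _
      _ ≤ |q| / √(2 * π) := by
          simpa [abs_of_nonneg, abs_nonneg] using abs_stdNormalCDF_sub_le (-(|q| / 2)) (|q| / 2)
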